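/- arXiv:1412.5856 — 4 statements merged into one kernel-verified Lean document; each statement's English description precedes it below -/
import Mathlib

section
/- Let q be a Q-matrix on ℕ and let P be a substochastic transition function satisfying the backward integral equation for q. Then for every subset A ⊆ ℕ and every state i ∉ A, one has lim_{t→0⁺} (1/t) ∑_{j∈A} P t i j = ∑_{j∈A} q i j. -/
open scoped BigOperators
open Filter Topology

/-- Row `i` of `q` with the diagonal entry replaced by `0`
(used to form sums over the off-diagonal entries). -/
noncomputable def offDiag (q : ℕ → ℕ → ℝ) (i j : ℕ) : ℝ :=
  if j = i then 0 else q i j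

/-- `q` is a (totally stable) Q-matrix on `ℕ`: nonnegative off-diagonal entries,
nonpositive diagonal, and each row is summable off the diagonal with
`∑_{j ≠ i} q i j ≤ qᵢ := -q i i`. -/
def IsQMatrix (q : ℕ → ℕ → ℝ) : Prop :=
  (∀ i j, i ≠ j → 0 ≤ q i j) ∧
  (∀ i, q i i ≤ 0) ∧
  (∀ i, Summable (fun j => offDiag q i j)) ∧
  (∀ i, (∑' j, offDiag q i j) ≤ - q i i)

/-- A Q-matrix is conservative if each row sums to `0`:
`∑_{j ≠ i} q i j = qᵢ = -q i i`. -/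
def IsConservative (q : ℕ → ℕ → ℝ) : Prop :=
  ∀ i, (∑' j, offDiag q i j) = - q i i

/-- A Q-matrix is bounded if `sup_i qᵢ < ∞`. -/
def IsBoundedQ (q : ℕ → ℕ → ℝ) : Prop :=
  ∃ C : ℝ, ∀ i, - q i i ≤ C

/-- A substochastic transition function on `[0,∞)` (parametrized by `t : ℝ`,
with all conditions imposed for `t ≥ 0`). -/
def IsTransitionFunction (P : ℝ → ℕ → ℕ → ℝ) : Prop :=
  (∀ t i j, 0 ≤ t → 0 ≤ P t i j) ∧
  (∀ t i, 0 ≤ t → Summable (fun j => P t i j)) ∧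
  (∀ t i, 0 ≤ t → (∑' j, P t i j) ≤ 1) ∧
  (∀ i j, P 0 i j = if i = j then 1 else 0) ∧
  (∀ t s i j, 0 ≤ t → 0 ≤ s → P (t + s) i j = ∑' k, P t i k * P s k j)

/-- `P` satisfies the backward integral equation for the Q-matrix `q`:
`P t i j = δ_{ij} e^{-qᵢ t} + ∫_0^t e^{-qᵢ (t-s)} ∑_{k ≠ i} q i k P s k j ds`
(here `-qᵢ = q i i`). -/
def BackwardEq (q : ℕ → ℕ → ℝ) (P : ℝ → ℕ → ℕ → ℝ) : Prop :=
  ∀ t i j, 0 ≤ t →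
    P t i j = (if i = j then 1 else 0) * Real.exp (q i i * t) +
      ∫ s in (0:ℝ)..t,
        Real.exp (q i i * (t - s)) * (∑' k, if k = i then 0 else q i k * P s k j)

/-- `P` is the minimal Q-process for `q`: a substochastic transition function
satisfying the backward integral equation for `q`, which is pointwise below any
other such transition function. -/
def IsMinimalQProcess (q : ℕ → ℕ → ℝ) (P : ℝ → ℕ → ℕ → ℝ) : Prop :=
  IsTransitionFunction P ∧ BackwardEq q P ∧
  ∀ P', IsTransitionFunction P' → BackwardEq q P' →
    ∀ t i j, 0 ≤ t → P t i j ≤ P' t i j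

/-- `q` is regular (`IsRegularQ` to avoid a name clash with Mathlib): conservative, and the minimal Q-process is honest (stochastic). -/
def IsRegularQ (q : ℕ → ℕ → ℝ) : Prop :=
  IsConservative q ∧
  ∀ P, IsMinimalQProcess q P → ∀ t, 0 ≤ t → ∀ i, (∑' j, P t i j) = 1

/-- The tail sum `∑_{j ≥ k} f j`. -/
noncomputable def tailSum (f : ℕ → ℝ) (k : ℕ) : ℝ :=
  ∑' j, if k ≤ j then f j else 0

/-- Condition (1.1): stochastic comparability of `P1` and `P2`. -/
def Cond11 (P1 P2 : ℝ → ℕ → ℕ → ℝ) : Prop :=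
  ∀ t, 0 ≤ t → ∀ k i m, i ≤ m → tailSum (P1 t i) k ≤ tailSum (P2 t m) k

/-- Condition (1.2) for the Q-matrices `q1`, `q2`. -/
def Cond12 (q1 q2 : ℕ → ℕ → ℝ) : Prop :=
  ∀ i m, i ≤ m → ∀ k, (k ≤ i ∨ m + 1 ≤ k) →
    tailSum (q1 i) k ≤ tailSum (q2 m) k

/-- Condition (1.3) for the Q-matrices `q1`, `q2` (the conservative reduction
of (1.2)). -/
def Cond13 (q1 q2 : ℕ → ℕ → ℝ) : Prop :=
  ∀ i m, i ≤ m →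
    (∀ k, m + 1 ≤ k → tailSum (q1 i) k ≤ tailSum (q2 m) k) ∧
    (∀ k, k + 1 ≤ i →
      (∑ j ∈ Finset.range (k + 1), q2 m j) ≤ ∑ j ∈ Finset.range (k + 1), q1 i j)

/-!
Off the diagonal, the backward equation writes `P t i j` as `∫₀ᵗ e^{q i i (t - s)} g_j(s) ds`,
where `g_j(s) = ∑_{k ≠ i} q i k P s k j` is continuous with `g_j(0) = q i j`; hence
`P t i j / t → q i j` for each `j ≠ i`, which gives the lower bound for the sum over `A`
by truncating it to finite sets. For the upper bound, `∑_{j ∈ F} P s k j ≤ u_k(s)` for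
every finite `F ⊆ A`, where `u_k = 1` on `A` and `u_k = 1 - P s k k` off `A`; so the sum
over `F` of the integrands is dominated by `∑_k q i k u_k(s)`, a continuous function of `s`
whose value at `0` is `∑_{k ∈ A} q i k`. Continuity of `t ↦ P t k j` comes from the
Chapman–Kolmogorov estimate `|P (t + h) k j - P t k j| ≤ 1 - P h k k ≤ 1 - e^{q k k h}`.
-/

open MeasureTheory
open Set (Ici Ioi)

theorem tendsto_inv_mul_integral_exp_mul (c : ℝ) {g : ℝ → ℝ} (hg : ContinuousOn g (Ici 0)) :
    Tendsto (fun t : ℝ => (1 / t) * ∫ s in (0:ℝ)..t, Real.exp (c * (t - s)) * g s)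
      (𝓝[>] 0) (𝓝 (g 0)) := by
  set f : ℝ → ℝ := fun s => Real.exp (-c * s) * g s
  have hf : ContinuousOn f (Ici 0) := by fun_prop
  have hderiv : HasDerivWithinAt (fun u => ∫ s in (0:ℝ)..u, f s) (f 0) (Ici 0) 0 :=
    intervalIntegral.integral_hasDerivWithinAt_right
      ((hf.mono (by simp)).intervalIntegrable)
      ⟨Ioi 0, self_mem_nhdsWithin,
        (hf.mono Set.Ioi_subset_Ici_self).aestronglyMeasurable measurableSet_Ioi⟩
      ((hf 0 Set.self_mem_Ici).mono Set.Ioi_subset_Ici_self)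
  have hslope : Tendsto (fun t : ℝ => (1 / t) * ∫ s in (0:ℝ)..t, f s) (𝓝[>] 0) (𝓝 (g 0)) := by
    have h := hasDerivWithinAt_iff_tendsto_slope.1 hderiv
    rw [Set.Ici_sdiff_left] at h
    have hf0 : f 0 = g 0 := by simp [f]
    rw [hf0] at h
    refine h.congr fun t => ?_
    simp [slope_def_field, div_eq_inv_mul]
  have hexp : Tendsto (fun t : ℝ => Real.exp (c * t)) (𝓝[>] 0) (𝓝 1) := by
    have : Continuous fun t : ℝ => Real.exp (c * t) := by fun_prop
    simpa using (this.tendsto 0).mono_left nhdsWithin_le_nhds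
  have hfactor : ∀ t : ℝ, (1 / t) * ∫ s in (0:ℝ)..t, Real.exp (c * (t - s)) * g s
      = Real.exp (c * t) * ((1 / t) * ∫ s in (0:ℝ)..t, f s) := by
    intro t
    have hs : ∀ s : ℝ, Real.exp (c * (t - s)) * g s = Real.exp (c * t) * f s := fun s => by
      rw [show c * (t - s) = c * t + -c * s by ring, Real.exp_add, mul_assoc]
    rw [intervalIntegral.integral_congr (fun s _ => hs s), intervalIntegral.integral_const_mul]
    ring
  simpa only [hfactor, one_mul] using hexp.mul hslope

theorem intervalIntegrable_exp_mul (c : ℝ) {g : ℝ → ℝ} (hg : ContinuousOn g (Ici 0))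
    {t : ℝ} (ht : 0 ≤ t) :
    IntervalIntegrable (fun s => Real.exp (c * (t - s)) * g s) volume 0 t := by
  apply ContinuousOn.intervalIntegrable
  rw [Set.uIcc_of_le ht]
  exact ContinuousOn.mul (by fun_prop) (hg.mono fun _ hs => hs.1)

theorem IsQMatrix.offDiag_nonneg {q : ℕ → ℕ → ℝ} (hq : IsQMatrix q) (i k : ℕ) :
    0 ≤ offDiag q i k := by
  unfold offDiag
  split_ifs with hk
  · exact le_rfl
  · exact hq.1 i k (Ne.symm hk)

-- The weight `u_k(s)` of the upper bound.
open Classical in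
noncomputable def rowMassBound (P : ℝ → ℕ → ℕ → ℝ) (A : Set ℕ) (s : ℝ) (k : ℕ) : ℝ :=
  if k ∈ A then 1 else 1 - P s k k

theorem IsQMatrix.summable_offDiag_mul {q : ℕ → ℕ → ℝ} (hq : IsQMatrix q) (i : ℕ)
    {b : ℕ → ℝ} (hb₀ : ∀ k, 0 ≤ b k) (hb₁ : ∀ k, b k ≤ 1) :
    Summable (fun k => offDiag q i k * b k) :=
  Summable.of_nonneg_of_le (fun k => mul_nonneg (hq.offDiag_nonneg i k) (hb₀ k))
    (fun k => mul_le_of_le_one_right (hq.offDiag_nonneg i k) (hb₁ k)) (hq.2.2.1 i)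

namespace IsTransitionFunction

variable {P : ℝ → ℕ → ℕ → ℝ} (hP : IsTransitionFunction P)
include hP

theorem sum_le_one {t : ℝ} (ht : 0 ≤ t) (i : ℕ) (s : Finset ℕ) : ∑ j ∈ s, P t i j ≤ 1 :=
  (Summable.sum_le_tsum s (fun j _ => hP.1 t i j ht) (hP.2.1 t i ht)).trans (hP.2.2.1 t i ht)

theorem le_one {t : ℝ} (ht : 0 ≤ t) (i j : ℕ) : P t i j ≤ 1 := by
  simpa using hP.sum_le_one ht i {j}

theorem summable_mul_of_nonneg {t : ℝ} (ht : 0 ≤ t) (i : ℕ) {b : ℕ → ℝ}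
    (hb₀ : ∀ k, 0 ≤ b k) (hb₁ : ∀ k, b k ≤ 1) : Summable (fun k => P t i k * b k) :=
  Summable.of_nonneg_of_le (fun k => mul_nonneg (hP.1 t i k ht) (hb₀ k))
    (fun k => mul_le_of_le_one_right (hP.1 t i k ht) (hb₁ k)) (hP.2.1 t i ht)

theorem sum_le_one_sub_diag {t : ℝ} (ht : 0 ≤ t) {k : ℕ} {F : Finset ℕ} (hk : k ∉ F) :
    ∑ j ∈ F, P t k j ≤ 1 - P t k k := by
  have := hP.sum_le_one ht k (insert k F)
  rw [Finset.sum_insert hk] at this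
  linarith

theorem rowMassBound_nonneg {s : ℝ} (hs : 0 ≤ s) (A : Set ℕ) (k : ℕ) :
    0 ≤ rowMassBound P A s k := by
  unfold rowMassBound
  split_ifs
  · exact zero_le_one
  · exact sub_nonneg.2 (hP.le_one hs k k)

theorem rowMassBound_le_one {s : ℝ} (hs : 0 ≤ s) (A : Set ℕ) (k : ℕ) :
    rowMassBound P A s k ≤ 1 := by
  unfold rowMassBound
  split_ifs
  · exact le_rfl
  · exact sub_le_self _ (hP.1 s k k hs)

theorem sum_le_rowMassBound {s : ℝ} (hs : 0 ≤ s) {A : Set ℕ} {F : Finset ℕ} (hFA : ↑F ⊆ A)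
    (k : ℕ) : ∑ j ∈ F, P s k j ≤ rowMassBound P A s k := by
  unfold rowMassBound
  split_ifs with hk
  · exact hP.sum_le_one hs k F
  · exact hP.sum_le_one_sub_diag hs fun h => hk (hFA h)

theorem abs_sub_le_one_sub_diag {t h : ℝ} (ht : 0 ≤ t) (hh : 0 ≤ h) (k j : ℕ) :
    |P (t + h) k j - P t k j| ≤ 1 - P h k k := by
  have hCK : P (t + h) k j = ∑' m, P h k m * P t m j := by
    rw [add_comm]; exact hP.2.2.2.2 h t k j hh ht
  have hsum := hP.summable_mul_of_nonneg hh k (fun m => hP.1 t m j ht) (fun m => hP.le_one ht m j)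
  have hsum' := hP.summable_mul_of_nonneg hh k (fun m => sub_nonneg.2 (hP.le_one ht m j))
    (fun m => sub_le_self _ (hP.1 t m j ht))
  have hsplit : ∑' m, P h k m * P t m j = ∑' m, P h k m - ∑' m, P h k m * (1 - P t m j) := by
    rw [← (hP.2.1 h k hh).tsum_sub hsum']
    exact tsum_congr fun m => by ring
  have hlow : P h k k * P t k j ≤ ∑' m, P h k m * P t m j :=
    hsum.le_tsum k fun m _ => mul_nonneg (hP.1 h k m hh) (hP.1 t m j ht)
  have hhigh : P h k k * (1 - P t k j) ≤ ∑' m, P h k m * (1 - P t m j) :=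
    hsum'.le_tsum k fun m _ => mul_nonneg (hP.1 h k m hh) (sub_nonneg.2 (hP.le_one ht m j))
  rw [abs_le]
  constructor <;>
    nlinarith [hP.2.2.1 h k hh, hP.le_one hh k k, hP.le_one ht k j, hP.1 t k j ht]

end IsTransitionFunction

noncomputable def backwardIntegrand (q : ℕ → ℕ → ℝ) (P : ℝ → ℕ → ℕ → ℝ) (i j : ℕ) (s : ℝ) : ℝ :=
  ∑' k, if k = i then 0 else q i k * P s k j

noncomputable def backwardBound (q : ℕ → ℕ → ℝ) (P : ℝ → ℕ → ℕ → ℝ) (i : ℕ) (A : Set ℕ)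
    (s : ℝ) : ℝ :=
  ∑' k, offDiag q i k * rowMassBound P A s k

section BackwardEquation

variable {q : ℕ → ℕ → ℝ} {P : ℝ → ℕ → ℕ → ℝ}

theorem backwardIntegrand_eq_tsum (i j : ℕ) (s : ℝ) :
    backwardIntegrand q P i j s = ∑' k, offDiag q i k * P s k j := by
  refine tsum_congr fun k => ?_
  unfold offDiag
  split_ifs <;> simp

theorem backwardIntegrand_zero (hP : IsTransitionFunction P) (i j : ℕ) :
    backwardIntegrand q P i j 0 = offDiag q i j := by
  rw [backwardIntegrand_eq_tsum, tsum_eq_single j fun k hk => by simp [hP.2.2.2.1, hk]]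
  simp [hP.2.2.2.1]

theorem BackwardEq.eq_integral_of_ne (hPq : BackwardEq q P) {t : ℝ} (ht : 0 ≤ t) {i j : ℕ}
    (hij : i ≠ j) :
    P t i j = ∫ s in (0:ℝ)..t, Real.exp (q i i * (t - s)) * backwardIntegrand q P i j s := by
  rw [hPq t i j ht, if_neg hij, zero_mul, zero_add]
  rfl

theorem BackwardEq.exp_le_diag (hq : IsQMatrix q) (hP : IsTransitionFunction P)
    (hPq : BackwardEq q P) {t : ℝ} (ht : 0 ≤ t) (i : ℕ) : Real.exp (q i i * t) ≤ P t i i := by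
  rw [hPq t i i ht, if_pos rfl, one_mul, le_add_iff_nonneg_right]
  refine intervalIntegral.integral_nonneg ht fun s hs => mul_nonneg (Real.exp_nonneg _) ?_
  rw [← backwardIntegrand, backwardIntegrand_eq_tsum]
  exact tsum_nonneg fun k => mul_nonneg (hq.offDiag_nonneg i k) (hP.1 s k i hs.1)

theorem BackwardEq.abs_sub_le (hq : IsQMatrix q) (hP : IsTransitionFunction P)
    (hPq : BackwardEq q P) {t₁ t₂ : ℝ} (h₁ : 0 ≤ t₁) (h₂ : 0 ≤ t₂) (k j : ℕ) :
    |P t₂ k j - P t₁ k j| ≤ 1 - Real.exp (q k k * |t₂ - t₁|) := by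
  wlog h : t₁ ≤ t₂ generalizing t₁ t₂
  · rw [abs_sub_comm, abs_sub_comm t₂]
    exact this h₂ h₁ (le_of_not_ge h)
  have hd : 0 ≤ t₂ - t₁ := sub_nonneg.2 h
  have := hP.abs_sub_le_one_sub_diag h₁ hd k j
  rw [add_sub_cancel] at this
  rw [abs_of_nonneg hd]
  linarith [hPq.exp_le_diag hq hP hd k]

theorem BackwardEq.continuousOn (hq : IsQMatrix q) (hP : IsTransitionFunction P)
    (hPq : BackwardEq q P) (k j : ℕ) : ContinuousOn (fun t => P t k j) (Ici 0) := by
  intro t₀ ht₀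
  rw [ContinuousWithinAt, tendsto_iff_dist_tendsto_zero]
  have hbound : Tendsto (fun t => 1 - Real.exp (q k k * |t - t₀|)) (𝓝[Ici 0] t₀) (𝓝 0) := by
    have : Continuous fun t => 1 - Real.exp (q k k * |t - t₀|) := by fun_prop
    simpa using (this.tendsto t₀).mono_left nhdsWithin_le_nhds
  refine squeeze_zero' (Eventually.of_forall fun _ => dist_nonneg) ?_ hbound
  filter_upwards [self_mem_nhdsWithin] with t ht
  exact hPq.abs_sub_le hq hP ht₀ ht k j

theorem continuousOn_backwardIntegrand (hq : IsQMatrix q) (hP : IsTransitionFunction P)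
    (hPq : BackwardEq q P) (i j : ℕ) : ContinuousOn (backwardIntegrand q P i j) (Ici 0) := by
  simp only [funext (backwardIntegrand_eq_tsum (q := q) (P := P) i j)]
  refine continuousOn_tsum (fun k => continuousOn_const.mul (hPq.continuousOn hq hP k j))
    (hq.2.2.1 i) fun k s hs => ?_
  rw [Real.norm_of_nonneg (mul_nonneg (hq.offDiag_nonneg i k) (hP.1 s k j hs))]
  exact mul_le_of_le_one_right (hq.offDiag_nonneg i k) (hP.le_one hs k j)

theorem BackwardEq.tendsto_inv_mul_of_ne (hq : IsQMatrix q) (hP : IsTransitionFunction P)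
    (hPq : BackwardEq q P) {i j : ℕ} (hij : i ≠ j) :
    Tendsto (fun t : ℝ => (1 / t) * P t i j) (𝓝[>] 0) (𝓝 (q i j)) := by
  have h := tendsto_inv_mul_integral_exp_mul (q i i) (continuousOn_backwardIntegrand hq hP hPq i j)
  rw [backwardIntegrand_zero hP, _root_.offDiag, if_neg (Ne.symm hij)] at h
  refine h.congr' ?_
  filter_upwards [self_mem_nhdsWithin] with t ht
  rw [hPq.eq_integral_of_ne (le_of_lt ht) hij]

theorem continuousOn_backwardBound (hq : IsQMatrix q) (hP : IsTransitionFunction P)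
    (hPq : BackwardEq q P) (i : ℕ) (A : Set ℕ) :
    ContinuousOn (backwardBound q P i A) (Ici 0) := by
  classical
  refine continuousOn_tsum (fun k => continuousOn_const.mul ?_) (hq.2.2.1 i) fun k s hs => ?_
  · unfold rowMassBound
    split_ifs
    · exact continuousOn_const
    · exact continuousOn_const.sub (hPq.continuousOn hq hP k k)
  · rw [Real.norm_of_nonneg (mul_nonneg (hq.offDiag_nonneg i k) (hP.rowMassBound_nonneg hs A k))]
    exact mul_le_of_le_one_right (hq.offDiag_nonneg i k) (hP.rowMassBound_le_one hs A k)

theorem backwardBound_zero (hP : IsTransitionFunction P) {i : ℕ} {A : Set ℕ} (hi : i ∉ A) :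
    backwardBound q P i A 0 = ∑' j : A, q i j := by
  rw [tsum_subtype]
  refine tsum_congr fun k => ?_
  by_cases hk : k ∈ A
  · have hki : k ≠ i := fun h => hi (h ▸ hk)
    simp [rowMassBound, hk, hki, offDiag]
  · simp [rowMassBound, hk, hP.2.2.2.1]

theorem sum_backwardIntegrand_le_backwardBound (hq : IsQMatrix q) (hP : IsTransitionFunction P)
    {i : ℕ} {A : Set ℕ} {F : Finset ℕ} (hFA : ↑F ⊆ A) {s : ℝ} (hs : 0 ≤ s) :
    ∑ j ∈ F, backwardIntegrand q P i j s ≤ backwardBound q P i A s := by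
  simp only [backwardIntegrand_eq_tsum]
  rw [← Summable.tsum_finsetSum fun j _ => hq.summable_offDiag_mul i (fun k => hP.1 s k j hs)
    (fun k => hP.le_one hs k j)]
  simp only [← Finset.mul_sum]
  exact Summable.tsum_le_tsum
    (fun k => mul_le_mul_of_nonneg_left (hP.sum_le_rowMassBound hs hFA k) (hq.offDiag_nonneg i k))
    (hq.summable_offDiag_mul i (fun k => Finset.sum_nonneg fun j _ => hP.1 s k j hs)
      (fun k => hP.sum_le_one hs k F))
    (hq.summable_offDiag_mul i (hP.rowMassBound_nonneg hs A) (hP.rowMassBound_le_one hs A))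

theorem BackwardEq.sum_le_integral_backwardBound (hq : IsQMatrix q) (hP : IsTransitionFunction P)
    (hPq : BackwardEq q P) {i : ℕ} {A : Set ℕ} (hi : i ∉ A) {F : Finset ℕ} (hFA : ↑F ⊆ A)
    {t : ℝ} (ht : 0 ≤ t) :
    ∑ j ∈ F, P t i j ≤ ∫ s in (0:ℝ)..t, Real.exp (q i i * (t - s)) * backwardBound q P i A s := by
  have hiF : ∀ j ∈ F, i ≠ j := fun j hj h => hi (h ▸ hFA hj)
  rw [Finset.sum_congr rfl fun j hj => hPq.eq_integral_of_ne ht (hiF j hj),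
    ← intervalIntegral.integral_finsetSum fun j _ =>
      intervalIntegrable_exp_mul _ (continuousOn_backwardIntegrand hq hP hPq i j) ht]
  simp only [← Finset.mul_sum]
  refine intervalIntegral.integral_mono_on ht
    (intervalIntegrable_exp_mul _ (continuousOn_finsetSum F fun j _ =>
      continuousOn_backwardIntegrand hq hP hPq i j) ht)
    (intervalIntegrable_exp_mul _ (continuousOn_backwardBound hq hP hPq i A) ht) fun s hs => ?_
  exact mul_le_mul_of_nonneg_left (sum_backwardIntegrand_le_backwardBound hq hP hFA hs.1)
    (Real.exp_nonneg _)

theorem BackwardEq.eventually_lt_inv_mul_tsum (hq : IsQMatrix q) (hP : IsTransitionFunction P)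
    (hPq : BackwardEq q P) {i : ℕ} {A : Set ℕ} (hi : i ∉ A) {a : ℝ} (ha : a < ∑' j : A, q i j) :
    ∀ᶠ t in 𝓝[>] 0, a < (1 / t) * ∑' j : A, P t i j := by
  have hne : ∀ j : A, (j : ℕ) ≠ i := fun j h => hi (by rw [← h]; exact j.2)
  have hsum : Summable fun j : A => q i j := by
    refine ((hq.2.2.1 i).subtype A).congr fun j => ?_
    simp [offDiag, hne j]
  obtain ⟨F, hF⟩ := (hsum.hasSum.eventually (lt_mem_nhds ha)).exists
  have hlim : Tendsto (fun t : ℝ => (1 / t) * ∑ j ∈ F, P t i j) (𝓝[>] 0)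
      (𝓝 (∑ j ∈ F, q i j)) := by
    simp only [Finset.mul_sum]
    exact tendsto_finsetSum F fun j _ => hPq.tendsto_inv_mul_of_ne hq hP (hne j).symm
  filter_upwards [hlim.eventually (lt_mem_nhds hF), self_mem_nhdsWithin] with t h ht
  have ht : 0 ≤ t := le_of_lt ht
  exact h.trans_le (mul_le_mul_of_nonneg_left
    (Summable.sum_le_tsum F (fun j _ => hP.1 t i j ht) ((hP.2.1 t i ht).subtype A))
    (one_div_nonneg.2 ht))

theorem BackwardEq.eventually_inv_mul_tsum_lt (hq : IsQMatrix q) (hP : IsTransitionFunction P)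
    (hPq : BackwardEq q P) {i : ℕ} {A : Set ℕ} (hi : i ∉ A) {a : ℝ} (ha : ∑' j : A, q i j < a) :
    ∀ᶠ t in 𝓝[>] 0, (1 / t) * ∑' j : A, P t i j < a := by
  have hlim := tendsto_inv_mul_integral_exp_mul (q i i) (continuousOn_backwardBound hq hP hPq i A)
  rw [backwardBound_zero hP hi] at hlim
  filter_upwards [hlim.eventually (gt_mem_nhds ha), self_mem_nhdsWithin] with t h ht
  have ht : 0 ≤ t := le_of_lt ht
  refine lt_of_le_of_lt (mul_le_mul_of_nonneg_left ?_ (one_div_nonneg.2 ht)) h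
  refine Summable.tsum_le_of_sum_le ((hP.2.1 t i ht).subtype A) fun F => ?_
  have h := hPq.sum_le_integral_backwardBound hq hP hi
    (F := F.map (Function.Embedding.subtype (· ∈ A))) (by simp) ht
  rwa [Finset.sum_map] at h

end BackwardEquation

/-- for a substochastic transition function `P` satisfying the backward
integral equation for a Q-matrix `q`, for every `A ⊆ ℕ` and `i ∉ A`,
`lim_{t → 0⁺} (1/t) ∑_{j ∈ A} P t i j = ∑_{j ∈ A} q i j`. -/
theorem statement0 (q : ℕ → ℕ → ℝ) (hq : IsQMatrix q)
    (P : ℝ → ℕ → ℕ → ℝ) (hP : IsTransitionFunction P) (hPq : BackwardEq q P)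
    (A : Set ℕ) (i : ℕ) (hi : i ∉ A) :
    Filter.Tendsto (fun t : ℝ => (1 / t) * ∑' j : A, P t i j)
      (nhdsWithin 0 (Set.Ioi 0)) (nhds (∑' j : A, q i j)) :=
  tendsto_order.2 ⟨fun _ ha => hPq.eventually_lt_inv_mul_tsum hq hP hi ha,
    fun _ ha => hPq.eventually_inv_mul_tsum_lt hq hP hi ha⟩
end

section
/- Let q⁽¹⁾, q⁽²⁾ be Q-matrices on ℕ and let P⁽¹⁾, P⁽²⁾ be substochastic transition functions satisfying the backward integral equations for q⁽¹⁾ and q⁽²⁾ respectively. If condition (1.1) holds for P⁽¹⁾, P⁽²⁾, then condition (1.2) holds for q⁽¹⁾, q⁽²⁾. -/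
open scoped BigOperators
open Filter Topology

/-!
Both sides of (1.2) are right derivatives at `t = 0` of the tail sums compared in (1.1).
Summing the backward equation over `j ≥ k` gives
`∑_{j≥k} P t i j = e^{-qᵢ t} (1_{k≤i} + ∫_0^t e^{qᵢ s} ∑_{l≠i} q i l ∑_{j≥k} P s l j ds)`,
whose right derivative at `0` is `-qᵢ 1_{k≤i} + ∑_{l≠i, l≥k} q i l = ∑_{j≥k} q i j`; this needs the
integrand to be continuous, which holds because Chapman–Kolmogorov together with
`P h l l ≥ e^{-q_l h}` makes every `s ↦ P s l j` and every tail sum `q_l`-Lipschitz.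
For `k ≤ i` or `k > m` the two tail sums in (1.1) agree at `t = 0` (both equal
`1_{k≤i} = 1_{k≤m}`), so the inequality between them passes to their right derivatives.
-/

open MeasureTheory
open Set (Ici Ioi)

section Series

theorem summable_tail {f : ℕ → ℝ} (hf : Summable f) (k : ℕ) :
    Summable fun j => if k ≤ j then f j else 0 := by
  refine (hf.indicator {j | k ≤ j}).congr fun j => ?_
  simp [Set.indicator_apply]

theorem tailSum_nonneg {f : ℕ → ℝ} (hf0 : ∀ j, 0 ≤ f j) (k : ℕ) : 0 ≤ tailSum f k :=
  tsum_nonneg fun j => by split_ifs <;> simp [hf0 j]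

theorem tailSum_le_tsum {f : ℕ → ℝ} (hf : Summable f) (hf0 : ∀ j, 0 ≤ f j) (k : ℕ) :
    tailSum f k ≤ ∑' j, f j :=
  (summable_tail hf k).tsum_le_tsum (fun j => by split_ifs <;> simp [hf0 j]) hf

theorem hasSum_tail_single (i k : ℕ) (c : ℝ) :
    HasSum (fun j => if k ≤ j then (if i = j then c else 0) else 0) (if k ≤ i then c else 0) := by
  convert hasSum_ite_eq i (if k ≤ i then c else 0) using 2 with j
  by_cases hij : i = j
  · simp [hij]
  · simp [hij, Ne.symm hij]

theorem hasSum_tsum_mul_of_nonneg {p : ℕ → ℝ} {M : ℕ → ℕ → ℝ} (hp0 : ∀ u, 0 ≤ p u)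
    (hp : Summable p) (hM0 : ∀ u j, 0 ≤ M u j) (hM : ∀ u, Summable (M u))
    (hM1 : ∀ u, ∑' j, M u j ≤ 1) :
    HasSum (fun j => ∑' u, p u * M u j) (∑' u, p u * ∑' j, M u j) := by
  have hrow : ∀ u, Summable fun j => p u * M u j := fun u => (hM u).mul_left (p u)
  have hf : Summable (Function.uncurry fun u j => p u * M u j) := by
    refine (summable_prod_of_nonneg fun x => mul_nonneg (hp0 _) (hM0 _ _)).2 ⟨hrow, ?_⟩
    refine hp.of_nonneg_of_le (fun u => tsum_nonneg fun j => mul_nonneg (hp0 u) (hM0 u j))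
      fun u => ?_
    simp only [tsum_mul_left]
    exact mul_le_of_le_one_right (hp0 u) (hM1 u)
  refine hf.prod_symm.prod.hasSum_iff.2 ?_
  simp only [← tsum_mul_left]
  exact hf.tsum_comm' hrow fun j => hf.prod_symm.prod_factor j

theorem hasSum_tail_tsum_mul {p : ℕ → ℝ} {M : ℕ → ℕ → ℝ} (hp0 : ∀ u, 0 ≤ p u)
    (hp : Summable p) (hM0 : ∀ u j, 0 ≤ M u j) (hM : ∀ u, Summable (M u))
    (hM1 : ∀ u, ∑' j, M u j ≤ 1) (k : ℕ) :
    HasSum (fun j => if k ≤ j then ∑' u, p u * M u j else 0) (∑' u, p u * tailSum (M u) k) := by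
  unfold tailSum
  convert hasSum_tsum_mul_of_nonneg hp0 hp (M := fun u j => if k ≤ j then M u j else 0)
    (fun u j => by split_ifs <;> simp [hM0 u j]) (fun u => summable_tail (hM u) k)
    (fun u => (tailSum_le_tsum (hM u) (hM0 u) k).trans (hM1 u)) using 2 with j
  split_ifs <;> simp

theorem abs_tsum_mul_sub_le {p f : ℕ → ℝ} (hp0 : ∀ u, 0 ≤ p u) (hp : Summable p)
    (hp1 : ∑' u, p u ≤ 1) (hf0 : ∀ u, 0 ≤ f u) (hf1 : ∀ u, f u ≤ 1) (l : ℕ) :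
    |∑' u, p u * f u - f l| ≤ 1 - p l := by
  have hpf : Summable fun u => p u * f u :=
    hp.of_nonneg_of_le (fun u => mul_nonneg (hp0 u) (hf0 u))
      fun u => mul_le_of_le_one_right (hp0 u) (hf1 u)
  have hlow : p l * f l ≤ ∑' u, p u * f u :=
    hpf.le_tsum l fun u _ => mul_nonneg (hp0 u) (hf0 u)
  have hup : p l * (1 - f l) ≤ ∑' u, p u - ∑' u, p u * f u := by
    rw [← hp.tsum_sub hpf]
    refine le_of_le_of_eq ?_ (tsum_congr fun u => (mul_one_sub (p u) (f u)))
    exact ((hp.sub hpf).congr fun u => (mul_one_sub _ _).symm).le_tsum l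
      fun u _ => mul_nonneg (hp0 u) (sub_nonneg.2 (hf1 u))
  have := hp0 l
  have := hf0 l
  have := hf1 l
  rw [abs_le]
  constructor <;> nlinarith

theorem continuousOn_tsum_mul {X : Type*} [TopologicalSpace X] {S : Set X} {w : ℕ → ℝ}
    {φ : ℕ → X → ℝ} (hw0 : ∀ l, 0 ≤ w l) (hw : Summable w) (hφ : ∀ l, ContinuousOn (φ l) S)
    (hφ1 : ∀ l, ∀ x ∈ S, ‖φ l x‖ ≤ 1) : ContinuousOn (fun x => ∑' l, w l * φ l x) S :=
  continuousOn_tsum (fun l => continuousOn_const.mul (hφ l)) hw fun l x hx => by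
    rw [norm_mul, Real.norm_of_nonneg (hw0 l)]
    exact mul_le_of_le_one_right (hw0 l) (hφ1 l x hx)

end Series

section RealAnalysis

theorem lipschitzOnWith_Ici_of_abs_sub_le {φ : ℝ → ℝ} {C a : ℝ}
    (h : ∀ s h, a ≤ s → 0 ≤ h → |φ (h + s) - φ s| ≤ C * h) :
    LipschitzOnWith C.toNNReal φ (Ici a) := by
  refine LipschitzOnWith.of_dist_le_mul fun x hx y hy => ?_
  wlog hxy : y ≤ x generalizing x y
  · rw [dist_comm, dist_comm x]
    exact this y hy x hx (le_of_not_ge hxy)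
  have := h y (x - y) hy (sub_nonneg.2 hxy)
  rw [sub_add_cancel] at this
  rw [Real.dist_eq, Real.dist_eq, abs_of_nonneg (sub_nonneg.2 hxy)]
  exact this.trans (mul_le_mul_of_nonneg_right C.le_coe_toNNReal (sub_nonneg.2 hxy))

theorem le_of_hasDerivWithinAt_Ici {f g : ℝ → ℝ} {f' g' a : ℝ}
    (hf : HasDerivWithinAt f f' (Ici a) a) (hg : HasDerivWithinAt g g' (Ici a) a)
    (ha : f a = g a) (hfg : ∀ t, a < t → f t ≤ g t) : f' ≤ g' := by
  have hf' := (hasDerivWithinAt_iff_tendsto_slope' Set.self_notMem_Ioi).1 hf.Ioi_of_Ici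
  have hg' := (hasDerivWithinAt_iff_tendsto_slope' Set.self_notMem_Ioi).1 hg.Ioi_of_Ici
  refine le_of_tendsto_of_tendsto hf' hg' ?_
  filter_upwards [self_mem_nhdsWithin] with t ht
  rw [slope_def_field, slope_def_field, ha]
  exact div_le_div_of_nonneg_right (by linarith [hfg t ht]) (sub_pos.2 ht).le

end RealAnalysis

namespace IsQMatrix

variable {q : ℕ → ℕ → ℝ}

theorem offDiag_nonneg_s1 (hq : IsQMatrix q) (i l : ℕ) : 0 ≤ offDiag q i l := by
  unfold offDiag
  split_ifs with h
  · exact le_rfl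
  · exact hq.1 i l (Ne.symm h)

theorem summable_offDiag (hq : IsQMatrix q) (i : ℕ) : Summable (offDiag q i) :=
  hq.2.2.1 i

theorem tailSum_eq_add_tailSum_offDiag (hq : IsQMatrix q) (i k : ℕ) :
    tailSum (q i) k = (if k ≤ i then q i i else 0) + tailSum (offDiag q i) k := by
  refine (((hasSum_tail_single i k (q i i)).add
    (summable_tail (hq.summable_offDiag i) k).hasSum).congr_fun fun j => ?_).tsum_eq
  unfold offDiag
  by_cases hij : i = j
  · subst hij; simp
  · simp [hij, Ne.symm hij]

end IsQMatrix

namespace IsTransitionFunction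

variable {P : ℝ → ℕ → ℕ → ℝ} (hP : IsTransitionFunction P)
include hP

theorem nonneg {t : ℝ} (ht : 0 ≤ t) (i j : ℕ) : 0 ≤ P t i j := hP.1 t i j ht

theorem summable {t : ℝ} (ht : 0 ≤ t) (i : ℕ) : Summable (P t i) := hP.2.1 t i ht

theorem tsum_le_one {t : ℝ} (ht : 0 ≤ t) (i : ℕ) : ∑' j, P t i j ≤ 1 := hP.2.2.1 t i ht

theorem add_apply {t s : ℝ} (ht : 0 ≤ t) (hs : 0 ≤ s) (i j : ℕ) :
    P (t + s) i j = ∑' k, P t i k * P s k j :=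
  hP.2.2.2.2 t s i j ht hs

theorem tailSum_nonneg {t : ℝ} (ht : 0 ≤ t) (i k : ℕ) : 0 ≤ tailSum (P t i) k :=
  _root_.tailSum_nonneg (hP.nonneg ht i) k

theorem tailSum_le_one {t : ℝ} (ht : 0 ≤ t) (i k : ℕ) : tailSum (P t i) k ≤ 1 :=
  (tailSum_le_tsum (hP.summable ht i) (hP.nonneg ht i) k).trans (hP.tsum_le_one ht i)

theorem tailSum_zero (i k : ℕ) : tailSum (P 0 i) k = if k ≤ i then 1 else 0 := by
  simp only [tailSum, hP.2.2.2.1 i]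
  exact (hasSum_tail_single i k 1).tsum_eq

theorem tailSum_add {t s : ℝ} (ht : 0 ≤ t) (hs : 0 ≤ s) (i k : ℕ) :
    tailSum (P (t + s) i) k = ∑' u, P t i u * tailSum (P s u) k := by
  simp only [tailSum, hP.add_apply ht hs]
  exact (hasSum_tail_tsum_mul (hP.nonneg ht i) (hP.summable ht i) (fun u => hP.nonneg hs u)
    (hP.summable hs) (hP.tsum_le_one hs) k).tsum_eq

end IsTransitionFunction

noncomputable def tailRate (q : ℕ → ℕ → ℝ) (P : ℝ → ℕ → ℕ → ℝ) (i k : ℕ) (s : ℝ) : ℝ :=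
  ∑' l, offDiag q i l * tailSum (P s l) k

theorem hasSum_tail_tsum_offDiag_mul {q : ℕ → ℕ → ℝ} {P : ℝ → ℕ → ℕ → ℝ} (hq : IsQMatrix q)
    (hP : IsTransitionFunction P) {s : ℝ} (hs : 0 ≤ s) (i k : ℕ) :
    HasSum (fun j => if k ≤ j then ∑' l, offDiag q i l * P s l j else 0) (tailRate q P i k s) :=
  hasSum_tail_tsum_mul (hq.offDiag_nonneg_s1 i) (hq.summable_offDiag i) (fun u => hP.nonneg hs u)
    (hP.summable hs) (hP.tsum_le_one hs) k

theorem IsTransitionFunction.tailRate_zero {q : ℕ → ℕ → ℝ} {P : ℝ → ℕ → ℕ → ℝ}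
    (hP : IsTransitionFunction P) (i k : ℕ) : tailRate q P i k 0 = tailSum (offDiag q i) k := by
  simp only [tailRate, hP.tailSum_zero, mul_ite, mul_one, mul_zero]
  rfl

namespace BackwardEq

variable {q : ℕ → ℕ → ℝ} {P : ℝ → ℕ → ℕ → ℝ}

theorem apply_eq (hB : BackwardEq q P) {t : ℝ} (ht : 0 ≤ t) (i j : ℕ) :
    P t i j = (if i = j then Real.exp (q i i * t) else 0) +
      ∫ s in (0:ℝ)..t, Real.exp (q i i * (t - s)) * ∑' l, offDiag q i l * P s l j := by
  simpa only [offDiag, ite_mul, one_mul, zero_mul] using hB t i j ht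

theorem one_sub_diag_le (hq : IsQMatrix q) (hP : IsTransitionFunction P) (hB : BackwardEq q P)
    {t : ℝ} (ht : 0 ≤ t) (l : ℕ) : 1 - P t l l ≤ -q l l * t := by
  have hint : 0 ≤ ∫ s in (0:ℝ)..t, Real.exp (q l l * (t - s)) * ∑' u, offDiag q l u * P s u l :=
    intervalIntegral.integral_nonneg ht fun s hs => mul_nonneg (Real.exp_pos _).le <|
      tsum_nonneg fun u => mul_nonneg (hq.offDiag_nonneg_s1 l u) (hP.nonneg hs.1 u l)
  have hdiag := hB.apply_eq ht l l
  rw [if_pos rfl] at hdiag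
  linarith [Real.add_one_le_exp (q l l * t)]

theorem lipschitzOnWith_of_chapmanKolmogorov (hq : IsQMatrix q) (hP : IsTransitionFunction P)
    (hB : BackwardEq q P) {φ : ℕ → ℝ → ℝ} (hφ0 : ∀ u s, 0 ≤ s → 0 ≤ φ u s)
    (hφ1 : ∀ u s, 0 ≤ s → φ u s ≤ 1)
    (hφ : ∀ u s h, 0 ≤ s → 0 ≤ h → φ u (h + s) = ∑' v, P h u v * φ v s) (l : ℕ) :
    LipschitzOnWith (-q l l).toNNReal (φ l) (Ici 0) :=
  lipschitzOnWith_Ici_of_abs_sub_le fun s h hs hh => by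
    rw [hφ l s h hs hh]
    exact (abs_tsum_mul_sub_le (hP.nonneg hh l) (hP.summable hh l) (hP.tsum_le_one hh l)
      (hφ0 · s hs) (hφ1 · s hs) l).trans (one_sub_diag_le hq hP hB hh l)

theorem continuousOn_apply (hq : IsQMatrix q) (hP : IsTransitionFunction P)
    (hB : BackwardEq q P) (l j : ℕ) : ContinuousOn (fun s => P s l j) (Ici 0) :=
  (lipschitzOnWith_of_chapmanKolmogorov hq hP hB (φ := fun u s => P s u j)
    (fun u _ hs => hP.nonneg hs u j) (fun u _ hs => hP.le_one hs u j)
    (fun u _ _ hs hh => hP.add_apply hh hs u j) l).continuousOn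

theorem continuousOn_tailSum (hq : IsQMatrix q) (hP : IsTransitionFunction P)
    (hB : BackwardEq q P) (l k : ℕ) : ContinuousOn (fun s => tailSum (P s l) k) (Ici 0) :=
  (lipschitzOnWith_of_chapmanKolmogorov hq hP hB (φ := fun u s => tailSum (P s u) k)
    (fun u _ hs => hP.tailSum_nonneg hs u k) (fun u _ hs => hP.tailSum_le_one hs u k)
    (fun u _ _ hs hh => hP.tailSum_add hh hs u k) l).continuousOn

theorem continuousOn_tsum_offDiag_mul_apply (hq : IsQMatrix q) (hP : IsTransitionFunction P)
    (hB : BackwardEq q P) (i j : ℕ) :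
    ContinuousOn (fun s => ∑' l, offDiag q i l * P s l j) (Ici 0) :=
  continuousOn_tsum_mul (hq.offDiag_nonneg_s1 i) (hq.summable_offDiag i)
    (fun l => hB.continuousOn_apply hq hP l j) fun l s hs => by
      rw [Real.norm_of_nonneg (hP.nonneg hs l j)]
      exact hP.le_one hs l j

theorem continuousOn_tailRate (hq : IsQMatrix q) (hP : IsTransitionFunction P)
    (hB : BackwardEq q P) (i k : ℕ) : ContinuousOn (tailRate q P i k) (Ici 0) :=
  continuousOn_tsum_mul (hq.offDiag_nonneg_s1 i) (hq.summable_offDiag i)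
    (fun l => hB.continuousOn_tailSum hq hP l k) fun l s hs => by
      rw [Real.norm_of_nonneg (hP.tailSum_nonneg hs l k)]
      exact hP.tailSum_le_one hs l k

theorem hasSum_tail_integral (hq : IsQMatrix q) (hP : IsTransitionFunction P)
    (hB : BackwardEq q P) (i k : ℕ) {t : ℝ} (ht : 0 ≤ t) :
    HasSum (fun j => if k ≤ j then
        ∫ s in (0:ℝ)..t, Real.exp (q i i * (t - s)) * ∑' l, offDiag q i l * P s l j else 0)
      (∫ s in (0:ℝ)..t, Real.exp (q i i * (t - s)) * tailRate q P i k s) := by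
  set F : ℕ → ℝ → ℝ := fun j s =>
    if k ≤ j then Real.exp (q i i * (t - s)) * ∑' l, offDiag q i l * P s l j else 0 with hF
  have hexp : Continuous fun s => Real.exp (q i i * (t - s)) := by fun_prop
  have hFsum : ∀ s, 0 ≤ s → HasSum (F · s) (Real.exp (q i i * (t - s)) * tailRate q P i k s) :=
    fun s hs => by
      simpa only [hF, mul_ite, mul_zero] using
        (hasSum_tail_tsum_offDiag_mul hq hP hs i k).mul_left (Real.exp (q i i * (t - s)))
  have hF0 : ∀ j s, 0 ≤ s → 0 ≤ F j s := fun j s hs => by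
    simp only [hF]
    split_ifs
    exacts [mul_nonneg (Real.exp_pos _).le (tsum_nonneg fun l =>
      mul_nonneg (hq.offDiag_nonneg_s1 i l) (hP.nonneg hs l j)), le_rfl]
  have hFcont : ∀ j, ContinuousOn (F j) (Ici 0) := fun j => by
    by_cases hkj : k ≤ j
    · simp only [hF, hkj, if_true]
      exact hexp.continuousOn.mul (hB.continuousOn_tsum_offDiag_mul_apply hq hP i j)
    · simpa only [hF, hkj, if_false] using continuousOn_const
  have hIcc : Set.uIcc 0 t ⊆ Ici 0 := by
    rw [Set.uIcc_of_le ht]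
    exact Set.Icc_subset_Ici_self
  have hIoc : ∀ s ∈ Set.uIoc (0:ℝ) t, 0 ≤ s := fun s hs => by
    rw [Set.uIoc_of_le ht] at hs
    exact hs.1.le
  have hdom := intervalIntegral.hasSum_integral_of_dominated_convergence F
    (fun j => ((hFcont j).mono hIcc).intervalIntegrable (μ := volume) |>.def'.aestronglyMeasurable)
    (fun j => ae_of_all _ fun s hs => (Real.norm_of_nonneg (hF0 j s (hIoc s hs))).le)
    (ae_of_all _ fun s hs => (hFsum s (hIoc s hs)).summable)
    ((hexp.continuousOn.mul ((hB.continuousOn_tailRate hq hP i k).mono hIcc)).congr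
      fun s hs => (hFsum s (hIcc hs)).tsum_eq).intervalIntegrable
    (ae_of_all _ fun s hs => hFsum s (hIoc s hs))
  refine hdom.congr_fun fun j => ?_
  by_cases hkj : k ≤ j <;> simp [hF, hkj]

theorem tailSum_eq_exp_mul (hq : IsQMatrix q) (hP : IsTransitionFunction P) (hB : BackwardEq q P)
    (i k : ℕ) {t : ℝ} (ht : 0 ≤ t) :
    tailSum (P t i) k = Real.exp (q i i * t) * ((if k ≤ i then 1 else 0) +
      ∫ s in (0:ℝ)..t, Real.exp (-(q i i * s)) * tailRate q P i k s) := by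
  have hsum := (hasSum_tail_single i k (Real.exp (q i i * t))).add
    (hB.hasSum_tail_integral hq hP i k ht)
  have hexp : ∀ s, Real.exp (q i i * (t - s)) = Real.exp (q i i * t) * Real.exp (-(q i i * s)) :=
    fun s => by rw [← Real.exp_add]; ring_nf
  rw [tailSum, (hsum.congr_fun fun j => ?_).tsum_eq]
  · simp only [hexp, mul_assoc, intervalIntegral.integral_const_mul]
    split_ifs <;> ring
  · by_cases hkj : k ≤ j
    · simp only [hkj, if_true]
      exact hB.apply_eq ht i j
    · simp [hkj]

theorem hasDerivWithinAt_tailSum (hq : IsQMatrix q) (hP : IsTransitionFunction P)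
    (hB : BackwardEq q P) (i k : ℕ) :
    HasDerivWithinAt (fun t => tailSum (P t i) k) (tailSum (q i) k) (Ici 0) 0 := by
  set g : ℝ → ℝ := fun s => Real.exp (-(q i i * s)) * tailRate q P i k s with hg
  have hgc : ContinuousOn g (Ici 0) :=
    (Real.continuous_exp.comp (by fun_prop)).continuousOn.mul (hB.continuousOn_tailRate hq hP i k)
  have hint : HasDerivWithinAt (fun t => ∫ s in (0:ℝ)..t, g s) (g 0) (Ici 0) 0 :=
    intervalIntegral.integral_hasDerivWithinAt_right IntervalIntegrable.refl
      ((hgc.mono Set.Ioi_subset_Ici_self).stronglyMeasurableAtFilter_nhdsWithin measurableSet_Ioi 0)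
      ((hgc.continuousWithinAt Set.self_mem_Ici).mono Set.Ioi_subset_Ici_self)
  have hexp : HasDerivAt (fun t => Real.exp (q i i * t)) (q i i) 0 := by
    simpa using ((hasDerivAt_id (0:ℝ)).const_mul (q i i)).exp
  have hprod := hexp.hasDerivWithinAt.mul
    ((hasDerivWithinAt_const 0 (Ici 0) (if k ≤ i then (1:ℝ) else 0)).add hint)
  refine (hprod.congr_of_mem (fun t ht => hB.tailSum_eq_exp_mul hq hP i k ht)
    Set.self_mem_Ici).congr_deriv ?_
  simp only [hg, hq.tailSum_eq_add_tailSum_offDiag, hP.tailRate_zero]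
  simp

end BackwardEq

/-- condition (1.1) for the transition functions implies condition (1.2)
for the corresponding Q-matrices. -/
theorem statement1 (q1 q2 : ℕ → ℕ → ℝ) (hq1 : IsQMatrix q1) (hq2 : IsQMatrix q2)
    (P1 P2 : ℝ → ℕ → ℕ → ℝ)
    (hP1 : IsTransitionFunction P1) (hP1q : BackwardEq q1 P1)
    (hP2 : IsTransitionFunction P2) (hP2q : BackwardEq q2 P2)
    (h11 : Cond11 P1 P2) :
    Cond12 q1 q2 := by
  intro i m him k hk
  have h0 : tailSum (P1 0 i) k = tailSum (P2 0 m) k := by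
    rw [hP1.tailSum_zero, hP2.tailSum_zero]
    rcases hk with hk | hk
    · rw [if_pos hk, if_pos (hk.trans him)]
    · rw [if_neg (by omega), if_neg (by omega)]
  exact le_of_hasDerivWithinAt_Ici (hP1q.hasDerivWithinAt_tailSum hq1 hP1 i k)
    (hP2q.hasDerivWithinAt_tailSum hq2 hP2 m k) h0 fun t ht => h11 t ht.le k i m him
end

section
/- For every α > 1, the counterexample matrices q⁽¹⁾, q⁽²⁾ satisfy condition (1.2) (equivalently, condition (1.3)). -/
/-! Both matrices are birth–death matrices with birth rates `b` and death rates `d`. In a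
conservative birth–death row `i` the tail sum from `k` is `b i` at `k = i + 1`, `-d i` at
`k = i ≥ 1` and `0` otherwise, so (1.2) reduces to `b⁽¹⁾ ≤ b⁽²⁾`, `d⁽²⁾ ≤ d⁽¹⁾` and
`b⁽²⁾, d⁽¹⁾ ≥ 0`, which hold for `α ≥ 1`. Since the rows sum to `0`, the head sums in (1.3)
are the negated tail sums, so (1.3) follows from (1.2). -/

open scoped BigOperators
open Filter Topology

/-- The first counterexample birth-death Q-matrix: `q i (i-1) = q i (i+1) = (i+1)²`
(for `i ≥ 1`; `q 0 1 = 1`), conservative diagonal. -/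
noncomputable def qCE1 : ℕ → ℕ → ℝ := fun i j =>
  if j = i + 1 then ((i : ℝ) + 1) ^ 2
  else if j + 1 = i then ((i : ℝ) + 1) ^ 2
  else if j = i then (if i = 0 then -1 else -2 * ((i : ℝ) + 1) ^ 2)
  else 0

/-- The second counterexample birth-death Q-matrix: `q i (i-1) = (i+1)²`,
`q i (i+1) = α(i+1)²`, conservative diagonal. -/
noncomputable def qCE2 (α : ℝ) : ℕ → ℕ → ℝ := fun i j =>
  if j = i + 1 then α * ((i : ℝ) + 1) ^ 2
  else if j + 1 = i then ((i : ℝ) + 1) ^ 2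
  else if j = i then (if i = 0 then -α else -(1 + α) * ((i : ℝ) + 1) ^ 2)
  else 0

open Finset

theorem tailSum_eq_neg_sum_range {f : ℕ → ℝ} (hf : HasSum f 0) (k : ℕ) :
    tailSum f k = -∑ j ∈ range k, f j := by
  have hhead : HasSum (fun j => if k ≤ j then 0 else f j) (∑ j ∈ range k, f j) := by
    rw [← sum_congr rfl fun j hj => if_neg (not_le.mpr (mem_range.mp hj))]
    exact hasSum_sum_of_ne_finset_zero fun j hj => if_pos (not_lt.mp (mt mem_range.mpr hj))
  have htail := hf.sub hhead
  rw [zero_sub] at htail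
  refine (htail.congr_fun fun j => ?_).tsum_eq
  split_ifs <;> simp

theorem Cond12.cond13 {q1 q2 : ℕ → ℕ → ℝ} (h : Cond12 q1 q2)
    (hq1 : ∀ i, HasSum (q1 i) 0) (hq2 : ∀ m, HasSum (q2 m) 0) : Cond13 q1 q2 := by
  refine fun i m him => ⟨fun k hk => h i m him k (Or.inr hk), fun k hk => ?_⟩
  have := h i m him (k + 1) (Or.inl hk)
  rw [tailSum_eq_neg_sum_range (hq1 i), tailSum_eq_neg_sum_range (hq2 m)] at this
  linarith

/-- The birth–death Q-matrix with birth rates `b` and death rates `d`; state `0` has no death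
rate, so `d 0` is never used. -/
noncomputable def birthDeath (b d : ℕ → ℝ) (i j : ℕ) : ℝ :=
  if j = i + 1 then b i
  else if j + 1 = i then d i
  else if j = i then (if i = 0 then -b i else -(b i + d i))
  else 0

section BirthDeath

variable (b d : ℕ → ℝ)

theorem birthDeath_of_ne {i j : ℕ} (h1 : j ≠ i + 1) (h2 : j + 1 ≠ i) (h3 : j ≠ i) :
    birthDeath b d i j = 0 := by
  simp [birthDeath, h1, h2, h3]

theorem sum_range_birthDeath_of_lt {i k : ℕ} (hk : k < i) :
    ∑ j ∈ range k, birthDeath b d i j = 0 :=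
  sum_eq_zero fun j hj => birthDeath_of_ne b d (by grind) (by grind) (by grind)

theorem sum_range_birthDeath (i : ℕ) :
    ∑ j ∈ range i, birthDeath b d i j = if i = 0 then 0 else d i := by
  cases i with
  | zero => simp
  | succ n =>
    rw [sum_range_succ, sum_range_birthDeath_of_lt b d (Nat.lt_succ_self n)]
    simp [birthDeath, show n ≠ n + 1 + 1 by omega]

theorem hasSum_birthDeath (i : ℕ) : HasSum (birthDeath b d i) 0 := by
  have hsupp : ∀ j ∉ range (i + 2), birthDeath b d i j = 0 := fun j hj =>
    birthDeath_of_ne b d (by grind) (by grind) (by grind)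
  have hrow : ∑ j ∈ range (i + 2), birthDeath b d i j = 0 := by
    rw [sum_range_succ, sum_range_succ, sum_range_birthDeath]
    by_cases hi : i = 0 <;> simp [birthDeath, hi]
  exact hrow ▸ hasSum_sum_of_ne_finset_zero hsupp

theorem tailSum_birthDeath (i k : ℕ) :
    tailSum (birthDeath b d i) k =
      if k = i + 1 then b i else if k = i ∧ i ≠ 0 then -d i else 0 := by
  rcases lt_or_ge i k with hik | hki
  · rw [tailSum, tsum_eq_single (i + 1) fun j hj => ?_]
    · rw [if_neg (by omega : ¬(k = i ∧ i ≠ 0))]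
      by_cases hk : k = i + 1
      · simp [hk, birthDeath]
      · simp [hk, show ¬k ≤ i + 1 by omega]
    · split_ifs with hkj
      · exact birthDeath_of_ne b d hj (by omega) (by omega)
      · rfl
  · rw [tailSum_eq_neg_sum_range (hasSum_birthDeath b d i)]
    rcases hki.lt_or_eq with hki | rfl
    · rw [sum_range_birthDeath_of_lt b d hki]
      simp [hki.ne, (hki.trans_le (Nat.le_succ _)).ne]
    · rw [sum_range_birthDeath]
      by_cases hk : k = 0 <;> simp [hk]

end BirthDeath

theorem cond12_birthDeath {b₁ d₁ b₂ d₂ : ℕ → ℝ} (hb : b₁ ≤ b₂) (hd : d₂ ≤ d₁)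
    (hb₂ : ∀ i, 0 ≤ b₂ i) (hd₁ : ∀ i, 0 ≤ d₁ i) : Cond12 (birthDeath b₁ d₁) (birthDeath b₂ d₂) := by
  intro i m him k hk
  rw [tailSum_birthDeath, tailSum_birthDeath]
  rcases hk with hk | hk
  · rw [if_neg (show k ≠ i + 1 by omega), if_neg (show k ≠ m + 1 by omega)]
    rcases eq_or_ne i m with rfl | hne
    · split_ifs <;> linarith [hd i]
    · rw [if_neg (show ¬(k = m ∧ m ≠ 0) by omega)]
      split_ifs <;> linarith [hd₁ i]
  · rw [if_neg (show ¬(k = i ∧ i ≠ 0) by omega), if_neg (show ¬(k = m ∧ m ≠ 0) by omega)]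
    rcases eq_or_ne i m with rfl | hne
    · split_ifs <;> linarith [hb i]
    · rw [if_neg (show k ≠ i + 1 by omega)]
      split_ifs <;> linarith [hb₂ m]

theorem qCE1_eq_birthDeath :
    qCE1 = birthDeath (fun i => ((i : ℝ) + 1) ^ 2) (fun i => ((i : ℝ) + 1) ^ 2) := by
  ext i j
  simp only [qCE1, birthDeath]
  split_ifs <;> simp_all; ring

theorem qCE2_eq_birthDeath (α : ℝ) :
    qCE2 α = birthDeath (fun i => α * ((i : ℝ) + 1) ^ 2) (fun i => ((i : ℝ) + 1) ^ 2) := by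
  ext i j
  simp only [qCE2, birthDeath]
  split_ifs <;> simp_all; ring

/-- for every `α > 1` the counterexample matrices satisfy
condition (1.2) (equivalently (1.3)). -/
theorem statement3 (α : ℝ) (hα : 1 < α) :
    Cond12 qCE1 (qCE2 α) ∧ Cond13 qCE1 (qCE2 α) := by
  have h12 : Cond12 qCE1 (qCE2 α) := by
    rw [qCE1_eq_birthDeath, qCE2_eq_birthDeath]
    refine cond12_birthDeath (fun i => ?_) le_rfl (fun i => ?_) (fun i => by positivity)
    · exact le_mul_of_one_le_left (by positivity) hα.le
    · exact mul_nonneg (by linarith) (by positivity)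
  refine ⟨h12, h12.cond13 ?_ ?_⟩
  · rw [qCE1_eq_birthDeath]; exact hasSum_birthDeath _ _
  · rw [qCE2_eq_birthDeath]; exact hasSum_birthDeath _ _
end

section
/- For every real β > 0, the series ∑_{n=0}^∞ β^{−(n+1)} · (∑_{k=0}^n β^k/(k+1)²) converges if and only if β > 1. -/
open scoped BigOperators
open Filter Topology

/-! For `β > 1` the series is the Cauchy product of the absolutely convergent series
`∑ 1/(k+1)²` with the geometric series `∑ β^{-(j+1)}`. For `β ≤ 1` its `n`-th term is at
least its `k = 0` summand `β^{-(n+1)} ≥ 1`, so the terms do not tend to `0`. -/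

open Finset

theorem summable_inv_pow_mul_sum_pow_mul {𝕜 : Type*} [NormedField 𝕜] [CompleteSpace 𝕜]
    {x : 𝕜} (hx : 1 < ‖x‖) {a : ℕ → 𝕜} (ha : Summable fun k => ‖a k‖) :
    Summable fun n : ℕ => (x ^ (n + 1))⁻¹ * ∑ k ∈ range (n + 1), x ^ k * a k := by
  have hx0 : x ≠ 0 := norm_pos_iff.mp (one_pos.trans hx)
  have hgeom : Summable fun j : ℕ => ‖x⁻¹ ^ (j + 1)‖ := by
    simp_rw [norm_pow, norm_inv]
    exact (summable_nat_add_iff 1).mpr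
      (summable_geometric_of_lt_one (by positivity) (inv_lt_one_of_one_lt₀ hx))
  refine (summable_norm_sum_mul_range_of_summable_norm ha hgeom).of_norm.congr fun n => ?_
  rw [mul_sum]
  refine sum_congr rfl fun k hk => ?_
  have hkn : n + 1 = k + (n - k + 1) := by have := mem_range.mp hk; omega
  rw [hkn, pow_add x, mul_inv, inv_pow]
  field_simp

theorem one_le_inv_pow_mul_sum_pow_mul {β : ℝ} (hβ : 0 < β) (hβ1 : β ≤ 1) {a : ℕ → ℝ}
    (ha : ∀ k, 0 ≤ a k) (ha0 : 1 ≤ a 0) (n : ℕ) :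
    1 ≤ (β ^ (n + 1))⁻¹ * ∑ k ∈ range (n + 1), β ^ k * a k :=
  calc 1 ≤ (β ^ (n + 1))⁻¹ * 1 := by
        rw [mul_one]; exact one_le_inv₀ (by positivity) |>.mpr (pow_le_one₀ hβ.le hβ1)
    _ ≤ (β ^ (n + 1))⁻¹ * (β ^ 0 * a 0) := by rw [pow_zero, one_mul]; gcongr
    _ ≤ (β ^ (n + 1))⁻¹ * ∑ k ∈ range (n + 1), β ^ k * a k := by
        gcongr
        exact single_le_sum (fun k _ => mul_nonneg (by positivity) (ha k)) (by simp)

theorem summable_norm_inv_nat_add_one_sq : Summable fun k : ℕ => ‖(((k : ℝ) + 1) ^ 2)⁻¹‖ := by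
  simp_rw [norm_inv, norm_pow, Real.norm_eq_abs]
  exact_mod_cast (summable_nat_add_iff 1).mpr (Real.summable_nat_pow_inv.mpr one_lt_two)

/-- for `β > 0`, Feller's series
`∑_n β^{-(n+1)} ∑_{k=0}^n β^k/(k+1)²` converges iff `β > 1`. -/
theorem statement5 (β : ℝ) (hβ : 0 < β) :
    Summable (fun n : ℕ =>
      (1 / β ^ (n + 1)) * ∑ k ∈ Finset.range (n + 1), β ^ k / ((k : ℝ) + 1) ^ 2)
    ↔ 1 < β := by
  simp only [div_eq_mul_inv, one_mul]
  constructor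
  · intro h
    by_contra! hβ1
    have hterm_ge := one_le_inv_pow_mul_sum_pow_mul hβ hβ1
      (a := fun k : ℕ => (((k : ℝ) + 1) ^ 2)⁻¹) (fun k => by positivity) (by simp)
    exact one_pos.not_ge (ge_of_tendsto' h.tendsto_atTop_zero hterm_ge)
  · intro hβ1
    exact summable_inv_pow_mul_sum_pow_mul (by rwa [Real.norm_of_nonneg hβ.le])
      summable_norm_inv_nat_add_one_sq
end
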